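/- arXiv:1207.6734 — 4 statements merged into one kernel-verified Lean document; each statement's English description precedes it below -/
import Mathlib

section
/- For every M>1 there exist constants K>0 and δ>0 such that for all integers i≥1 and all θ,θ'∈[0,2π)^d, the sliced propagator C_i(θ;θ') = ∫_{M^{-2i}}^{M^{-2(i-1)}} dα e^{-αm²} ∫_0^{2π} dλ ∏_{ℓ=1}^d K_α(θ_ℓ - θ'_ℓ + λ) satisfies C_i(θ;θ') ≤ K M^{(d-2)i} ∫_0^{2π} dλ e^{-δ M^i Σ_ℓ |θ_ℓ - θ'_ℓ + λ|}, where K_α is the U(1) heat kernel at time α and |·| denotes distance on the circle. -/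
/-!
Write `t = M^i`, so that the `i`-th slice is `t² α ∈ [1, M²]`. Each winding term of the heat
kernel is split as `e^{-y²/8α} · e^{-y²/8α}`: the first factor is at most the Gaussian
`e^{-ρ²/8α}` in the circle distance `ρ`, the second is summable over windings uniformly in
`α ≤ 1`. Hence `K_α(x) ≲ α^{-1/2} e^{-ρ²/8α} ≲ t e^{-tρ}` on the slice. The `d` kernels give
`t^d e^{-t Σ ρ_ℓ}`, the slice has length at most `M² t⁻²`, and `e^{-α m²} ≤ 1`.
-/

open Real MeasureTheory

/-- The heat kernel on U(1) ≅ ℝ/2πℤ at time α (winding-number representation). -/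
noncomputable def heatK (α θ : ℝ) : ℝ :=
  ∑' n : ℤ, (1 / Real.sqrt (4 * π * α)) * Real.exp (-(θ + 2 * π * n) ^ 2 / (4 * α))

/-- Distance on the circle of circumference 2π. -/
noncomputable def circleDist (x : ℝ) : ℝ := sInf {y : ℝ | ∃ n : ℤ, y = |x - 2 * π * n|}

/-- The `i`-th slice (Schwinger parameter `α ∈ [M^{-2i}, M^{-2(i-1)}]`) of the
gauge-averaged propagator of the U(1)^d TGFT with gauge invariance condition. -/
noncomputable def slicedProp (d : ℕ) (m M : ℝ) (i : ℕ) (θ θ' : Fin d → ℝ) : ℝ :=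
  ∫ α in (M ^ (-(2 : ℝ) * (i : ℝ)))..(M ^ (-(2 : ℝ) * ((i : ℝ) - 1))),
    Real.exp (-α * m ^ 2) *
      ∫ lam in (0 : ℝ)..(2 * π), ∏ ℓ : Fin d, heatK α (θ ℓ - θ' ℓ + lam)

lemma circleDist_nonneg (x : ℝ) : 0 ≤ circleDist x :=
  Real.sInf_nonneg fun _ ⟨_, hn⟩ => hn ▸ abs_nonneg _

lemma circleDist_le_abs_add (x : ℝ) (n : ℤ) : circleDist x ≤ |x + 2 * π * n| :=
  csInf_le ⟨0, fun _ ⟨_, hk⟩ => hk ▸ abs_nonneg _⟩ ⟨-n, by push_cast; ring_nf⟩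

lemma circleDist_le_circleDist_add_dist (x y : ℝ) : circleDist x ≤ circleDist y + dist x y := by
  rw [← sub_le_iff_le_add, Real.dist_eq]
  show _ ≤ sInf _
  refine le_csInf ⟨_, 0, rfl⟩ ?_
  rintro _ ⟨n, rfl⟩
  have hx := circleDist_le_abs_add x (-n)
  rw [Int.cast_neg, show x + 2 * π * -(n : ℝ) = (x - y) + (y - 2 * π * n) by ring] at hx
  linarith [abs_add_le (x - y) (y - 2 * π * n)]

lemma lipschitzWith_circleDist : LipschitzWith 1 circleDist :=
  LipschitzWith.of_le_add circleDist_le_circleDist_add_dist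

@[fun_prop]
lemma continuous_circleDist : Continuous circleDist :=
  lipschitzWith_circleDist.continuous

lemma heatK_nonneg (α θ : ℝ) : 0 ≤ heatK α θ :=
  tsum_nonneg fun _ => by positivity

lemma summable_exp_neg_abs_int : Summable fun n : ℤ => exp (-|(n : ℝ)|) :=
  .of_nat_of_neg (by simpa using Real.summable_exp_neg_nat)
    (by simpa using Real.summable_exp_neg_nat)

lemma abs_int_sub_le_sq_div_eight {x R : ℝ} (hx : |x| ≤ R) (n : ℤ) :
    |(n : ℝ)| - R - 2 ≤ (x + 2 * π * n) ^ 2 / 8 := by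
  have hwind : |(n : ℝ)| - R ≤ |x + 2 * π * n| := by
    have h := abs_sub (x + 2 * π * n) x
    rw [add_sub_cancel_left, abs_mul, abs_of_pos Real.two_pi_pos] at h
    nlinarith [Real.pi_gt_three, abs_nonneg (n : ℝ)]
  nlinarith [sq_nonneg (|x + 2 * π * n| - 4), sq_abs (x + 2 * π * n)]

/-- Half of the Gaussian decay in each winding term gives the circle-distance Gaussian,
the other half pays for the sum over windings. -/
lemma exp_winding_le {α x R : ℝ} (hα : 0 < α) (hα₁ : α ≤ 1) (hx : |x| ≤ R) (n : ℤ) :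
    exp (-(x + 2 * π * n) ^ 2 / (4 * α)) ≤
      exp (R + 2) * exp (-circleDist x ^ 2 / (8 * α)) * exp (-|(n : ℝ)|) := by
  rw [← exp_add, ← exp_add, exp_le_exp]
  set y := x + 2 * π * n
  have hdist : circleDist x ^ 2 / (8 * α) ≤ y ^ 2 / (8 * α) := by
    have h := pow_le_pow_left₀ (circleDist_nonneg x) (circleDist_le_abs_add x n) 2
    rw [sq_abs] at h
    gcongr
  have hα8 : y ^ 2 / 8 ≤ y ^ 2 / (8 * α) :=
    div_le_div_of_nonneg_left (sq_nonneg y) (by positivity) (by linarith)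
  have hsplit : y ^ 2 / (4 * α) = y ^ 2 / (8 * α) + y ^ 2 / (8 * α) := by
    field_simp; ring
  have := abs_int_sub_le_sq_div_eight hx n
  rw [neg_div, neg_div, hsplit]
  linarith

noncomputable def windingConst (R : ℝ) : ℝ :=
  exp (R + 2) * (∑' n : ℤ, exp (-|(n : ℝ)|)) / √(4 * π)

lemma windingConst_pos (R : ℝ) : 0 < windingConst R := by
  have := summable_exp_neg_abs_int.tsum_pos (fun _ => (exp_pos _).le) 0 (exp_pos _)
  unfold windingConst
  positivity

lemma heatK_le_windingConst_mul_gaussian {α x R : ℝ} (hα : 0 < α) (hα₁ : α ≤ 1)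
    (hx : |x| ≤ R) :
    heatK α x ≤ windingConst R / √α * exp (-circleDist x ^ 2 / (8 * α)) := by
  have hterm : ∀ n : ℤ, 1 / √(4 * π * α) * exp (-(x + 2 * π * n) ^ 2 / (4 * α)) ≤
      1 / √(4 * π * α) *
        (exp (R + 2) * exp (-circleDist x ^ 2 / (8 * α)) * exp (-|(n : ℝ)|)) :=
    fun n => mul_le_mul_of_nonneg_left (exp_winding_le hα hα₁ hx n) (by positivity)
  have hsum := (summable_exp_neg_abs_int.mul_left
    (exp (R + 2) * exp (-circleDist x ^ 2 / (8 * α)))).mul_left (1 / √(4 * π * α))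
  calc heatK α x ≤ _ :=
        (hsum.of_nonneg_of_le (fun _ => by positivity) hterm).tsum_le_tsum hterm hsum
    _ = windingConst R / √α * exp (-circleDist x ^ 2 / (8 * α)) := by
      rw [tsum_mul_left, tsum_mul_left, windingConst, Real.sqrt_mul (by positivity)]
      field_simp

/-- The Gaussian is traded for exponential decay by AM-GM: `t ρ ≤ ρ² / 8α + 2 M²` when
`t² α ≤ M²`. -/
lemma heatK_le_on_slice {M t α x R : ℝ} (hM : 0 < M) (hMt : M ≤ t) (hα₁ : 1 ≤ t ^ 2 * α)
    (hα₂ : t ^ 2 * α ≤ M ^ 2) (hx : |x| ≤ R) :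
    heatK α x ≤ windingConst R * exp (2 * M ^ 2) * t * exp (-t * circleDist x) := by
  have ht : 0 < t := hM.trans_le hMt
  have hα : 0 < α := pos_of_mul_pos_right (one_pos.trans_le hα₁) (sq_nonneg t)
  have hα_le_one : α ≤ 1 := by
    have := pow_le_pow_left₀ hM.le hMt 2
    exact le_of_mul_le_mul_left (by linarith) (pow_pos ht 2)
  have hsqrt : 1 / √α ≤ t := by
    have h := Real.one_le_sqrt.2 hα₁
    rw [Real.sqrt_mul (sq_nonneg t), Real.sqrt_sq ht.le] at h
    rw [div_le_iff₀ (Real.sqrt_pos.2 hα)]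
    linarith
  have hgauss : exp (-circleDist x ^ 2 / (8 * α)) ≤ exp (2 * M ^ 2) * exp (-t * circleDist x) := by
    rw [← exp_add, exp_le_exp, neg_div, neg_le, le_div_iff₀ (by positivity)]
    nlinarith [sq_nonneg (circleDist x - 4 * α * t), mul_le_mul_of_nonneg_left hα₂ hα.le]
  calc heatK α x ≤ windingConst R / √α * exp (-circleDist x ^ 2 / (8 * α)) :=
        heatK_le_windingConst_mul_gaussian hα hα_le_one hx
    _ = windingConst R * (1 / √α) * exp (-circleDist x ^ 2 / (8 * α)) := by ring
    _ ≤ windingConst R * t * (exp (2 * M ^ 2) * exp (-t * circleDist x)) := by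
      have := windingConst_pos R
      gcongr
    _ = _ := by ring

lemma intervalIntegral.integral_mono_on_of_nonneg {f g : ℝ → ℝ} {a b : ℝ} (hab : a ≤ b)
    (hf : ∀ x ∈ Set.Icc a b, 0 ≤ f x) (hg : IntervalIntegrable g volume a b)
    (hfg : ∀ x ∈ Set.Icc a b, f x ≤ g x) :
    ∫ x in a..b, f x ≤ ∫ x in a..b, g x := by
  by_cases hfi : IntervalIntegrable f volume a b
  · exact intervalIntegral.integral_mono_on hab hfi hg hfg
  · rw [intervalIntegral.integral_undef hfi]
    exact intervalIntegral.integral_nonneg hab fun x hx => (hf x hx).trans (hfg x hx)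

lemma abs_sub_add_le_four_pi {θ θ' lam : ℝ} (hθ : θ ∈ Set.Ico 0 (2 * π))
    (hθ' : θ' ∈ Set.Ico 0 (2 * π)) (hlam : lam ∈ Set.Icc 0 (2 * π)) :
    |θ - θ' + lam| ≤ 4 * π :=
  abs_le.2 ⟨by linarith [hθ.1, hθ'.2, hlam.1, Real.pi_pos], by linarith [hθ.2, hθ'.1, hlam.2]⟩

lemma prod_mul_exp_neg_mul {ι : Type*} [Fintype ι] (a t : ℝ) (ρ : ι → ℝ) :
    ∏ ℓ, a * exp (-t * ρ ℓ) = a ^ Fintype.card ι * exp (-1 * t * ∑ ℓ, ρ ℓ) := by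
  rw [Finset.prod_mul_distrib, Finset.prod_const, Finset.card_univ, ← exp_sum,
    Finset.mul_sum]
  simp only [neg_mul, one_mul]

lemma integral_prod_heatK_le {d : ℕ} {α c t : ℝ} {θ θ' : Fin d → ℝ}
    (hθ : ∀ ℓ, θ ℓ ∈ Set.Ico 0 (2 * π)) (hθ' : ∀ ℓ, θ' ℓ ∈ Set.Ico 0 (2 * π))
    (hheat : ∀ x, |x| ≤ 4 * π → heatK α x ≤ c * t * exp (-t * circleDist x)) :
    ∫ lam in (0 : ℝ)..(2 * π), ∏ ℓ, heatK α (θ ℓ - θ' ℓ + lam) ≤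
      (c * t) ^ d * ∫ lam in (0 : ℝ)..(2 * π),
        exp (-1 * t * ∑ ℓ, circleDist (θ ℓ - θ' ℓ + lam)) := by
  rw [← intervalIntegral.integral_const_mul]
  refine intervalIntegral.integral_mono_on_of_nonneg Real.two_pi_pos.le
    (fun _ _ => Finset.prod_nonneg fun _ _ => heatK_nonneg _ _)
    (Continuous.intervalIntegrable (by fun_prop) _ _) fun lam hlam => ?_
  calc ∏ ℓ, heatK α (θ ℓ - θ' ℓ + lam)
      ≤ ∏ ℓ, c * t * exp (-t * circleDist (θ ℓ - θ' ℓ + lam)) :=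
        Finset.prod_le_prod (fun _ _ => heatK_nonneg _ _)
          fun ℓ _ => hheat _ (abs_sub_add_le_four_pi (hθ ℓ) (hθ' ℓ) hlam)
    _ = _ := by rw [prod_mul_exp_neg_mul, Fintype.card_fin]

lemma sq_rpow_mul_rpow_neg_two_mul {M : ℝ} (hM : 0 < M) (s : ℝ) :
    (M ^ s) ^ 2 * M ^ (-2 * s) = 1 := by
  rw [← Real.rpow_natCast, ← Real.rpow_mul hM.le, ← Real.rpow_add hM]
  ring_nf
  exact Real.rpow_zero M

lemma rpow_neg_two_mul_sub_one {M : ℝ} (hM : 0 < M) (s : ℝ) :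
    M ^ (-2 * (s - 1)) = M ^ 2 * M ^ (-2 * s) := by
  rw [← Real.rpow_natCast M 2, ← Real.rpow_add hM]
  ring_nf

lemma rpow_sub_two_mul {M : ℝ} (hM : 0 < M) (d : ℕ) (s : ℝ) :
    M ^ ((d - 2) * s) = (M ^ s) ^ d * M ^ (-2 * s) := by
  rw [← Real.rpow_natCast, ← Real.rpow_mul hM.le, ← Real.rpow_add hM]
  ring_nf

lemma norm_slice_integrand_le {d : ℕ} {m M t α : ℝ} {θ θ' : Fin d → ℝ} (hM : 0 < M)
    (hMt : M ≤ t) (hα₁ : 1 ≤ t ^ 2 * α) (hα₂ : t ^ 2 * α ≤ M ^ 2)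
    (hθ : ∀ ℓ, θ ℓ ∈ Set.Ico 0 (2 * π)) (hθ' : ∀ ℓ, θ' ℓ ∈ Set.Ico 0 (2 * π)) :
    ‖exp (-α * m ^ 2) * ∫ lam in (0 : ℝ)..(2 * π), ∏ ℓ, heatK α (θ ℓ - θ' ℓ + lam)‖ ≤
      (windingConst (4 * π) * exp (2 * M ^ 2) * t) ^ d *
        ∫ lam in (0 : ℝ)..(2 * π), exp (-1 * t * ∑ ℓ, circleDist (θ ℓ - θ' ℓ + lam)) := by
  have hα : 0 ≤ α := (pos_of_mul_pos_right (one_pos.trans_le hα₁) (sq_nonneg t)).le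
  have hexp : exp (-α * m ^ 2) ≤ 1 := exp_le_one_iff.2 (by nlinarith [sq_nonneg m])
  have hlam_nonneg : 0 ≤ ∫ lam in (0 : ℝ)..(2 * π), ∏ ℓ, heatK α (θ ℓ - θ' ℓ + lam) :=
    intervalIntegral.integral_nonneg Real.two_pi_pos.le
      fun _ _ => Finset.prod_nonneg fun _ _ => heatK_nonneg _ _
  rw [Real.norm_eq_abs, abs_of_nonneg (mul_nonneg (exp_pos _).le hlam_nonneg)]
  exact (mul_le_of_le_one_left hlam_nonneg hexp).trans
    (integral_prod_heatK_le hθ hθ' fun x hx => heatK_le_on_slice hM hMt hα₁ hα₂ hx)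

theorem sliced_propagator_bound_general (d : ℕ) (m : ℝ) (M : ℝ) (hM : 1 < M) :
    ∃ K > (0 : ℝ), ∃ δ > (0 : ℝ), ∀ i : ℕ, 1 ≤ i →
      ∀ θ θ' : Fin d → ℝ,
        (∀ ℓ, θ ℓ ∈ Set.Ico (0 : ℝ) (2 * π)) →
        (∀ ℓ, θ' ℓ ∈ Set.Ico (0 : ℝ) (2 * π)) →
        slicedProp d m M i θ θ' ≤
          K * M ^ (((d : ℝ) - 2) * (i : ℝ)) *
            ∫ lam in (0 : ℝ)..(2 * π),
              Real.exp (-δ * M ^ (i : ℝ) * ∑ ℓ : Fin d, circleDist (θ ℓ - θ' ℓ + lam)) := by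
  have hM0 : 0 < M := one_pos.trans hM
  set c := windingConst (4 * π) * exp (2 * M ^ 2)
  have hc : 0 < c := mul_pos (windingConst_pos _) (exp_pos _)
  refine ⟨M ^ 2 * c ^ d, by positivity, 1, one_pos, fun i hi θ θ' hθ hθ' => ?_⟩
  set t := M ^ (i : ℝ)
  set a := M ^ (-(2 : ℝ) * i)
  have hta : t ^ 2 * a = 1 := sq_rpow_mul_rpow_neg_two_mul hM0 i
  have ha : 0 < a := Real.rpow_pos_of_pos hM0 _
  have hMt : M ≤ t := Real.self_le_rpow_of_one_le hM.le (by exact_mod_cast hi)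
  have hab : a ≤ M ^ 2 * a := le_mul_of_one_le_left ha.le (one_le_pow₀ hM.le)
  set I := ∫ lam in (0 : ℝ)..(2 * π), exp (-1 * t * ∑ ℓ, circleDist (θ ℓ - θ' ℓ + lam))
  have hI : 0 ≤ I := intervalIntegral.integral_nonneg Real.two_pi_pos.le fun _ _ => (exp_pos _).le
  have hslice : ∀ α ∈ Set.uIoc a (M ^ 2 * a), ‖exp (-α * m ^ 2) *
      ∫ lam in (0 : ℝ)..(2 * π), ∏ ℓ, heatK α (θ ℓ - θ' ℓ + lam)‖ ≤ (c * t) ^ d * I := by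
    rintro α ⟨hα₁, hα₂⟩
    rw [min_eq_left hab] at hα₁
    rw [max_eq_right hab] at hα₂
    refine norm_slice_integrand_le hM0 hMt ?_ ?_ hθ hθ'
    · nlinarith [mul_le_mul_of_nonneg_left hα₁.le (sq_nonneg t)]
    · nlinarith [mul_le_mul_of_nonneg_left hα₂ (sq_nonneg t)]
  calc slicedProp d m M i θ θ' ≤ (c * t) ^ d * I * |M ^ 2 * a - a| := by
        rw [slicedProp, rpow_neg_two_mul_sub_one hM0]
        exact (le_abs_self _).trans (intervalIntegral.norm_integral_le_of_norm_le_const hslice)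
    _ ≤ (c * t) ^ d * I * (M ^ 2 * a) := by
        rw [abs_of_nonneg (sub_nonneg.2 hab)]
        gcongr
        linarith
    _ = M ^ 2 * c ^ d * M ^ (((d : ℝ) - 2) * (i : ℝ)) * I := by
        rw [rpow_sub_two_mul hM0]
        ring

/-- **Sliced propagator bound.** For every `M > 1` there are constants `K, δ > 0` such that
for all `i ≥ 1` and all `θ, θ' ∈ [0,2π)^d`,
`C_i(θ;θ') ≤ K M^{(d-2)i} ∫ dλ e^{-δ M^i Σ_ℓ |θ_ℓ - θ'_ℓ + λ|}`
with `|·|` the distance on the circle. -/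
theorem sliced_propagator_bound (d : ℕ) (m : ℝ) (hm : 0 < m) (M : ℝ) (hM : 1 < M) :
    ∃ K > (0 : ℝ), ∃ δ > (0 : ℝ), ∀ i : ℕ, 1 ≤ i →
      ∀ θ θ' : Fin d → ℝ,
        (∀ ℓ, θ ℓ ∈ Set.Ico (0 : ℝ) (2 * π)) →
        (∀ ℓ, θ' ℓ ∈ Set.Ico (0 : ℝ) (2 * π)) →
        slicedProp d m M i θ θ' ≤
          K * M ^ (((d : ℝ) - 2) * (i : ℝ)) *
            ∫ lam in (0 : ℝ)..(2 * π),
              Real.exp (-δ * M ^ (i : ℝ) * ∑ ℓ : Fin d, circleDist (θ ℓ - θ' ℓ + lam)) :=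
  sliced_propagator_bound_general d m M hM
end

section
/- Contraction of a subgraph is well-defined and is characterized globally: for a subgraph H of a TGFT graph G, the graph G/H obtained by successively contracting all lines of H (in any order) is equal to the graph obtained by (a) deleting all faces of G internal to H, and (b) replacing every external face of the colored extension H_c by a single line of the corresponding color. -/
/-! Basic formal model of TGFT Feynman graphs: a rank-`d` TGFT graph is encoded through
its colored extension, a `(d+1)`-edge-colored graph.  Nodes are elements of `V`; for each
color `c : Fin (d+1)` the partial matching `edge c` pairs nodes (color `0` lines are the
propagator lines, colors `1,…,d` are the internal colored lines of the bubbles). -/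
structure PreGraph (d : ℕ) (V : Type) where
  verts : Finset V
  edge : Fin (d + 1) → V → Option V

variable {d : ℕ} {V : Type}

/-- The axioms making the data a genuine `(d+1)`-colored graph: each `edge c` is a
symmetric fixed-point-free partial matching supported on the vertices, which is total
(a perfect matching) for every color `c ≠ 0`. -/
def isColored (G : PreGraph d V) : Prop :=
  (∀ c a b, G.edge c a = some b → G.edge c b = some a) ∧
  (∀ c a b, G.edge c a = some b → a ∈ G.verts ∧ b ∈ G.verts) ∧
  (∀ c a, G.edge c a ≠ some a) ∧
  (∀ c : Fin (d + 1), c ≠ 0 → ∀ a ∈ G.verts, (G.edge c a).isSome)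

/-- `p = (n, n̄)` is a (color-0, i.e. propagator) line of `G`. -/
def isLine (G : PreGraph d V) (p : V × V) : Prop := G.edge 0 p.1 = some p.2

/-- Reconnection of a matching after deletion of the two nodes `n, m`:
partners of `n` and `m` get joined to each other. -/
def reconnect [DecidableEq V] (e : V → Option V) (n m : V) : V → Option V := fun a =>
  if a = n ∨ a = m then none
  else
    match e a with
    | none => none
    | some x =>
      if x = n then
        match e m with
        | none => none
        | some b => if b = n ∨ b = m then none else some b
      else if x = m then
        match e n with
        | none => none
        | some b => if b = n ∨ b = m then none else some b
      else some x

/-- Contraction of the color-0 line (dipole) with end nodes `n, m`: the two nodes are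
deleted together with all colored lines joining them, and the remaining open half-lines
are reconnected according to their colors. -/
def contractLine [DecidableEq V] (G : PreGraph d V) (n m : V) : PreGraph d V :=
  ⟨G.verts \ {n, m}, fun c => reconnect (G.edge c) n m⟩

/-- Successive contraction of a list of lines. -/
def contractList [DecidableEq V] : PreGraph d V → List (V × V) → PreGraph d V
  | G, [] => G
  | G, p :: r => contractList (contractLine G p.1 p.2) r

/-- One step along a face of color `c`: cross the color-`c` line then the color-0 line. -/
def faceStep (G : PreGraph d V) (c : Fin (d + 1)) (a : V) : Option V :=
  (G.edge c a).bind (G.edge 0)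

/-- Iterated face steps. -/
def iterStep (G : PreGraph d V) (c : Fin (d + 1)) : ℕ → V → Option V
  | 0, a => some a
  | k + 1, a => (faceStep G c a).bind (iterStep G c k)

/-- The (oriented) color-0 line crossed by the face of color `c` right after node `b`. -/
def crossedPair (G : PreGraph d V) (c : Fin (d + 1)) (b : V) : Option (V × V) :=
  match G.edge c b with
  | none => none
  | some x =>
    match G.edge 0 x with
    | none => none
    | some y => some (x, y)

/-- Two ordered pairs represent the same unordered line. -/
def pairMatch (p q : V × V) : Prop := p = q ∨ p = (q.2, q.1)

/-- The face of color `c` through node `a` closes with period `k` (an internal face of `G`). -/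
def ClosedFace (G : PreGraph d V) (c : Fin (d + 1)) (a : V) (k : ℕ) : Prop :=
  0 < k ∧ iterStep G c k a = some a

/-- The face of color `c` (of period `k`, based at `a`) passes through the line `p`. -/
def FaceCrosses (G : PreGraph d V) (c : Fin (d + 1)) (a : V) (k : ℕ) (p : V × V) : Prop :=
  ∃ j < k, ∃ b, iterStep G c j a = some b ∧
    ∃ xy, crossedPair G c b = some xy ∧ pairMatch xy p

/-- A closed face all of whose color-0 lines belong to the subgraph `S`
(an internal face of the subgraph `S`). -/
def ClosedFaceIn (G : PreGraph d V) (S : Finset (V × V)) (c : Fin (d + 1)) (a : V)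
    (k : ℕ) : Prop :=
  ClosedFace G c a k ∧
    ∀ j < k, ∀ b, iterStep G c j a = some b →
      ∃ q ∈ S, ∃ xy, crossedPair G c b = some xy ∧ pairMatch xy q

/-- Two lines of `S` lie on a common internal face of `S`: this realizes the line–face
incidence used to define connectedness of tensorial subgraphs. -/
def InternalFaceRel (G : PreGraph d V) (S : Finset (V × V)) (p q : V × V) : Prop :=
  ∃ c : Fin (d + 1), c ≠ 0 ∧ ∃ a k, ClosedFaceIn G S c a k ∧
    FaceCrosses G c a k p ∧ FaceCrosses G c a k q

/-- Connectedness of the subgraph `S` in the tensorial (face-incidence) sense. -/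
def ConnectedSub (G : PreGraph d V) (S : Finset (V × V)) : Prop :=
  ∀ p ∈ S, ∀ q ∈ S, Relation.EqvGen (InternalFaceRel G S) p q

/-- Two lines of `G` lie on a common closed face of `G`. -/
def WholeFaceRel (G : PreGraph d V) (p q : V × V) : Prop :=
  ∃ c : Fin (d + 1), c ≠ 0 ∧ ∃ a k, ClosedFace G c a k ∧
    FaceCrosses G c a k p ∧ FaceCrosses G c a k q

/-- Connectedness of `G` in the tensorial sense: the line–face incidence matrix does not
factorize into blocks, i.e. all pairs of lines are related through internal faces. -/
def GraphConnected (G : PreGraph d V) : Prop :=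
  ∀ p q : V × V, isLine G p → isLine G q → Relation.EqvGen (WholeFaceRel G) p q

/-- Number of additional colored lines joining the two end nodes of a line:
a line is a `k`-dipole iff this number is `k - 1`. -/
def shareCount [DecidableEq V] (G : PreGraph d V) (n m : V) : ℕ :=
  (Finset.univ.filter (fun c : Fin (d + 1) => c ≠ 0 ∧ G.edge c n = some m)).card

/-- Hepp-sector condition of a melopole: each line, in order, is (at least) a `d`-dipole
of the graph in which the previous lines have been contracted. -/
def MeloSteps [DecidableEq V] : PreGraph d V → List (V × V) → Prop
  | _, [] => True
  | G, p :: r => isLine G p ∧ d - 1 ≤ shareCount G p.1 p.2 ∧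
      MeloSteps (contractLine G p.1 p.2) r

/-- Adjacency through the colored (non-0) lines: nodes of the same bubble (vertex). -/
def ColoredAdj (G : PreGraph d V) (a b : V) : Prop :=
  ∃ c : Fin (d + 1), c ≠ 0 ∧ G.edge c a = some b

/-- Two nodes belong to the same bubble (interaction vertex). -/
def SameBubble (G : PreGraph d V) (a b : V) : Prop := Relation.EqvGen (ColoredAdj G) a b

/-- A melopole: a nonempty connected single-vertex (tadpole) subgraph whose lines admit
an ordering (Hepp sector) in which each successive quotient is a `d`-dipole. -/
def IsMelopole [DecidableEq V] (G : PreGraph d V) (S : Finset (V × V)) : Prop :=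
  S.Nonempty ∧ (∀ p ∈ S, isLine G p) ∧
  (∀ p ∈ S, ∀ q ∈ S, SameBubble G p.1 q.1) ∧
  (∀ p ∈ S, SameBubble G p.1 p.2) ∧
  ConnectedSub G S ∧
  ∃ l : List (V × V), l.Nodup ∧ l.toFinset = S ∧ MeloSteps G l

/-- Follow a face of color `c` through the deleted node set `D` until a surviving node is
reached: this replaces an external face of the contracted subgraph by a single line of
color `c`. -/
def chase [DecidableEq V] (G : PreGraph d V) (D : Finset V) (c : Fin (d + 1)) :
    ℕ → V → Option V
  | 0, _ => none
  | fuel + 1, a =>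
    match G.edge c a with
    | none => none
    | some x =>
      if x ∈ D then
        match G.edge 0 x with
        | none => none
        | some y => chase G D c fuel y
      else some x

/-- End nodes of a set of lines. -/
def endpoints [DecidableEq V] (S : Finset (V × V)) : Finset V :=
  S.image Prod.fst ∪ S.image Prod.snd

/-- The global description of the contraction of a subgraph `S`: (a) all nodes of `S`
(hence all internal faces of `S`) are deleted, and (b) every external face of the colored
extension of `S` is replaced by a single line of the corresponding color (realized by
`chase`). -/
def globalContract [DecidableEq V] (G : PreGraph d V) (S : Finset (V × V)) :
    PreGraph d V :=
  ⟨G.verts \ endpoints S,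
   fun c a => if a ∈ endpoints S then none
              else chase G (endpoints S) c (2 * S.card + 2) a⟩

/-! Contracting a line `(n, m)` joins each colored half-line ending at `n` to the one of the same
color ending at `m`: the new colored lines are the segments of faces through the deleted dipole.
Inductively, after contracting a list of pairwise disjoint lines, the colored line of color `c`
at a surviving node `a` leads to the first surviving node that the face of color `c` through `a`
reaches, passing through the deleted nodes along their propagator lines (`FaceExit`). This
depends only on the set of deleted nodes, hence not on the order of contraction, and `chase`
computes it because a face that leaves the deleted set passes through each deleted node at
most once. -/

structure IsPartialMatching (e : V → Option V) : Prop where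
  symm : ∀ {a b}, e a = some b → e b = some a
  ne_self : ∀ a, e a ≠ some a

theorem isColored.isPartialMatching {G : PreGraph d V} (hG : isColored G) (c : Fin (d + 1)) :
    IsPartialMatching (G.edge c) :=
  ⟨hG.1 c _ _, hG.2.2.1 c⟩

theorem IsPartialMatching.ne_of_eq_some {e : V → Option V} (he : IsPartialMatching e) {a b : V}
    (h : e a = some b) : a ≠ b := by
  rintro rfl
  exact he.ne_self a h

section Reconnect

variable [DecidableEq V] {e : V → Option V} {n m a b : V}

theorem reconnect_eq_some (hnm : n ≠ m) :
    reconnect e n m a = some b ↔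
      a ≠ n ∧ a ≠ m ∧ b ≠ n ∧ b ≠ m ∧
        (e a = some b ∨ (e a = some n ∧ e m = some b) ∨ (e a = some m ∧ e n = some b)) := by
  unfold reconnect
  rcases e a with _ | x <;> rcases e m with _ | y <;> rcases e n with _ | z <;> grind

theorem reconnect_isPartialMatching (he : IsPartialMatching e) (hnm : n ≠ m) :
    IsPartialMatching (reconnect e n m) where
  symm {a b} h := by
    obtain ⟨han, ham, hbn, hbm, h⟩ := (reconnect_eq_some hnm).mp h
    refine (reconnect_eq_some hnm).mpr ⟨hbn, hbm, han, ham, ?_⟩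
    rcases h with h | ⟨h₁, h₂⟩ | ⟨h₁, h₂⟩
    · exact .inl (he.symm h)
    · exact .inr (.inr ⟨he.symm h₂, he.symm h₁⟩)
    · exact .inr (.inl ⟨he.symm h₂, he.symm h₁⟩)
  ne_self a h := by
    obtain ⟨-, -, -, -, h⟩ := (reconnect_eq_some hnm).mp h
    rcases h with h | ⟨h₁, h₂⟩ | ⟨h₁, h₂⟩
    · exact he.ne_self a h
    · exact hnm (Option.some.inj (h₁.symm.trans (he.symm h₂)))
    · exact hnm (Option.some.inj (h₁.symm.trans (he.symm h₂))).symm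

theorem reconnect_eq_self (he : IsPartialMatching e) (hnm : e n = some m) (han : a ≠ n)
    (ham : a ≠ m) : reconnect e n m a = e a := by
  have hmn := he.symm hnm
  cases hx : e a with
  | none => simp [reconnect, han, ham, hx]
  | some x =>
    have hxn : x ≠ n := by rintro rfl; exact ham (Option.some.inj ((he.symm hx).symm.trans hnm))
    have hxm : x ≠ m := by rintro rfl; exact han (Option.some.inj ((he.symm hx).symm.trans hmn))
    exact (reconnect_eq_some (he.ne_of_eq_some hnm)).mpr ⟨han, ham, hxn, hxm, .inl hx⟩

end Reconnect

/-- Fuel-free form of `chase`: leaving `a` along its face of color `c` and passing through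
the color-0 lines at nodes of `D`, the face first reaches the node `b ∉ D`. -/
inductive FaceExit (G : PreGraph d V) (D : Finset V) (c : Fin (d + 1)) : V → V → Prop
  | exit {a x : V} : G.edge c a = some x → x ∉ D → FaceExit G D c a x
  | cross {a x y b : V} : G.edge c a = some x → x ∈ D → G.edge 0 x = some y →
      FaceExit G D c y b → FaceExit G D c a b

section FaceExit

variable {G : PreGraph d V} {D E : Finset V} {c : Fin (d + 1)} {a b : V}

theorem FaceExit.notMem (h : FaceExit G D c a b) : b ∉ D := by
  induction h with
  | exit _ hxD => exact hxD
  | cross _ _ _ _ ih => exact ih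

variable [DecidableEq V]

/-- A face that crosses `x` continues from `y` afterwards, so it can be restarted at `y` after
its last passage through `x`. -/
theorem FaceExit.erase {x y : V} (h : FaceExit G D c a b) (hxy : G.edge 0 x = some y) :
    FaceExit G (D.erase x) c a b ∨ FaceExit G (D.erase x) c y b := by
  induction h with
  | exit hx hxD => exact .inl (.exit hx fun h => hxD (Finset.mem_of_mem_erase h))
  | @cross a x' y' b hx hxD hy _ ih =>
    by_cases hx' : x' = x
    · subst hx'
      obtain rfl : y' = y := Option.some.inj (hy.symm.trans hxy)
      exact .inr (ih.elim id id)
    · exact ih.imp_left (.cross hx (Finset.mem_erase.2 ⟨hx', hxD⟩) hy)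

/-- A face never passes twice through the same node of `E` before leaving it, which bounds the
fuel needed by `chase`. -/
theorem FaceExit.chase_eq_some (h : FaceExit G E c a b) (hED : E ⊆ D) (hb : b ∉ D) {f : ℕ}
    (hf : E.card < f) : chase G D c f a = some b := by
  induction E using Finset.strongInduction generalizing a f with
  | H E ih =>
    obtain ⟨f, rfl⟩ : ∃ f', f = f' + 1 := ⟨f - 1, by omega⟩
    cases h with
    | exit hx _ => simp [chase, hx, hb]
    | cross hx hxE hy hyb =>
      have hyb' : FaceExit G (E.erase _) c _ b := (hyb.erase hy).elim id id
      have hE := Finset.card_pos.2 ⟨_, hxE⟩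
      have := ih _ (Finset.erase_ssubset hxE) hyb' ((Finset.erase_subset _ _).trans hED)
        (f := f) (by rw [Finset.card_erase_of_mem hxE]; omega)
      simpa [chase, hx, hED hxE, hy]

theorem FaceExit.of_chase_eq_some {f : ℕ} (h : chase G D c f a = some b) :
    FaceExit G D c a b := by
  induction f generalizing a with
  | zero => simp [chase] at h
  | succ f ih =>
    rcases hx : G.edge c a with _ | x
    · simp [chase, hx] at h
    by_cases hxD : x ∈ D
    · rcases hy : G.edge 0 x with _ | y
      · simp [chase, hx, hxD, hy] at h
      · simp only [chase, hx, hxD, hy, if_true] at h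
        exact .cross hx hxD hy (ih h)
    · simp only [chase, hx, hxD, if_false, Option.some.injEq] at h
      exact h ▸ .exit hx hxD

theorem chase_eq_some_iff {f : ℕ} (hf : D.card < f) :
    chase G D c f a = some b ↔ FaceExit G D c a b :=
  ⟨.of_chase_eq_some, fun h => h.chase_eq_some subset_rfl h.notMem hf⟩

theorem chase_eq_none_of_edge_eq_none {f : ℕ} (h : G.edge c a = none) :
    chase G D c f a = none := by
  cases f <;> simp [chase, h]

end FaceExit

section ContractLine

variable [DecidableEq V] {G : PreGraph d V} {D : Finset V} {c : Fin (d + 1)} {n m a b x : V}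

theorem contractLine_edge_zero (hG : IsPartialMatching (G.edge 0)) (hnm : G.edge 0 n = some m)
    (han : a ≠ n) (ham : a ≠ m) : (contractLine G n m).edge 0 a = G.edge 0 a :=
  reconnect_eq_self hG hnm han ham

theorem contractLine_edge_eq_some_of_cross (hG : ∀ c, IsPartialMatching (G.edge c))
    (hnm : G.edge 0 n = some m) (han : a ≠ n) (ham : a ≠ m) {z w : V} (hz : z = n ∨ z = m)
    (haz : G.edge c a = some z) (hzw : G.edge 0 z = some w) (hwx : G.edge c w = some x) :
    (contractLine G n m).edge c a = some x := by
  have hxw : x ≠ w := ((hG c).ne_of_eq_some hwx).symm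
  have hxz (haw : a ≠ w) : x ≠ z := by
    rintro rfl
    exact haw (Option.some.inj (((hG c).symm haz).symm.trans ((hG c).symm hwx)))
  have hne := (hG 0).ne_of_eq_some hnm
  rcases hz with rfl | rfl
  · obtain rfl : w = m := Option.some.inj (hzw.symm.trans hnm)
    exact (reconnect_eq_some hne).mpr ⟨han, ham, hxz ham, hxw, .inr (.inl ⟨haz, hwx⟩)⟩
  · obtain rfl : w = n := Option.some.inj (hzw.symm.trans ((hG 0).symm hnm))
    exact (reconnect_eq_some hne).mpr ⟨han, ham, hxw, hxz han, .inr (.inr ⟨haz, hwx⟩)⟩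

theorem faceExit_of_contractLine_edge (hG : ∀ c, IsPartialMatching (G.edge c))
    (hnm : G.edge 0 n = some m) (hx : (contractLine G n m).edge c a = some x)
    (hnext : ∀ a', G.edge c a' = some x → FaceExit G (insert n (insert m D)) c a' b) :
    FaceExit G (insert n (insert m D)) c a b := by
  rcases ((reconnect_eq_some ((hG 0).ne_of_eq_some hnm)).mp hx).2.2.2.2
    with h | ⟨h₁, h₂⟩ | ⟨h₁, h₂⟩
  · exact hnext a h
  · exact .cross h₁ (by simp) hnm (hnext m h₂)
  · exact .cross h₁ (by simp) ((hG 0).symm hnm) (hnext n h₂)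

theorem FaceExit.of_contractLine (hG : ∀ c, IsPartialMatching (G.edge c))
    (hnm : G.edge 0 n = some m) (h : FaceExit (contractLine G n m) D c a b) :
    FaceExit G (insert n (insert m D)) c a b := by
  have hne := (hG 0).ne_of_eq_some hnm
  induction h with
  | exit hx hxD =>
    obtain ⟨-, -, hxn, hxm, -⟩ := (reconnect_eq_some hne).mp hx
    exact faceExit_of_contractLine_edge hG hnm hx fun a' h => .exit h (by simp [hxn, hxm, hxD])
  | cross hx hxD hy _ ih =>
    obtain ⟨-, -, hxn, hxm, -⟩ := (reconnect_eq_some hne).mp hx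
    rw [contractLine_edge_zero (hG 0) hnm hxn hxm] at hy
    exact faceExit_of_contractLine_edge hG hnm hx fun a' h => .cross h (by simp [hxD]) hy ih

theorem FaceExit.toContractLine (hG : ∀ c, IsPartialMatching (G.edge c))
    (hnm : G.edge 0 n = some m) (h : FaceExit G (insert n (insert m D)) c a b) (han : a ≠ n)
    (ham : a ≠ m) : FaceExit (contractLine G n m) D c a b := by
  have hne := (hG 0).ne_of_eq_some hnm
  -- The induction also follows faces that have just crossed the contracted line from `z` to `a`.
  suffices (a ≠ n → a ≠ m → FaceExit (contractLine G n m) D c a b) ∧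
      ∀ a₀ z, a₀ ≠ n → a₀ ≠ m → (z = n ∨ z = m) → G.edge c a₀ = some z →
        G.edge 0 z = some a → FaceExit (contractLine G n m) D c a₀ b from this.1 han ham
  clear han ham
  induction h with
  | exit hx hxD =>
    simp only [Finset.mem_insert, not_or] at hxD
    obtain ⟨hxn, hxm, hxD⟩ := hxD
    refine ⟨fun han ham => .exit ?_ hxD, fun a₀ z h₀n h₀m hz h₁ h₂ =>
      .exit (contractLine_edge_eq_some_of_cross hG hnm h₀n h₀m hz h₁ h₂ hx) hxD⟩
    exact (reconnect_eq_some hne).mpr ⟨han, ham, hxn, hxm, .inl hx⟩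
  | @cross a x y b hx hxD hy _ ih =>
    have hcont (a₀ : V) (h : (contractLine G n m).edge c a₀ = some x) :
        FaceExit (contractLine G n m) D c a₀ b := by
      obtain ⟨-, -, hxn, hxm, -⟩ := (reconnect_eq_some hne).mp h
      have hy' := (contractLine_edge_zero (hG 0) hnm hxn hxm).trans hy
      obtain ⟨-, -, hyn, hym, -⟩ := (reconnect_eq_some hne).mp hy'
      exact .cross h (by simpa [hxn, hxm] using hxD) hy' (ih.1 hyn hym)
    refine ⟨fun han ham => ?_, fun a₀ z h₀n h₀m hz h₁ h₂ =>
      hcont a₀ (contractLine_edge_eq_some_of_cross hG hnm h₀n h₀m hz h₁ h₂ hx)⟩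
    by_cases hxnm : x = n ∨ x = m
    · exact ih.2 a x han ham hxnm hx hy
    · rw [not_or] at hxnm
      exact hcont a ((reconnect_eq_some hne).mpr ⟨han, ham, hxnm.1, hxnm.2, .inl hx⟩)

theorem faceExit_contractLine_iff (hG : ∀ c, IsPartialMatching (G.edge c))
    (hnm : G.edge 0 n = some m) (han : a ≠ n) (ham : a ≠ m) :
    FaceExit (contractLine G n m) D c a b ↔ FaceExit G (insert n (insert m D)) c a b :=
  ⟨.of_contractLine hG hnm, fun h => h.toContractLine hG hnm han ham⟩

end ContractLine

section GlobalContract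

variable [DecidableEq V] {G : PreGraph d V}

theorem endpoints_insert (p : V × V) (T : Finset (V × V)) :
    endpoints (insert p T) = insert p.1 (insert p.2 (endpoints T)) := by
  ext w
  simp only [endpoints, Finset.mem_union, Finset.mem_image, Finset.mem_insert]
  grind

theorem card_endpoints_le (T : Finset (V × V)) : (endpoints T).card ≤ 2 * T.card := by
  have := Finset.card_union_le (T.image Prod.fst) (T.image Prod.snd)
  have := T.card_image_le (f := Prod.fst)
  have := T.card_image_le (f := Prod.snd)
  unfold endpoints
  omega

theorem globalContract_empty (G : PreGraph d V) : globalContract G ∅ = G := by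
  have hend : endpoints (∅ : Finset (V × V)) = ∅ := by simp [endpoints]
  obtain ⟨verts, edge⟩ := G
  simp only [globalContract, hend, Finset.sdiff_empty, Finset.notMem_empty, if_false,
    Finset.card_empty, PreGraph.mk.injEq, true_and]
  funext c a
  cases h : edge c a <;> simp [chase, h]

theorem globalContract_contractLine (hG : ∀ c, IsPartialMatching (G.edge c)) {p : V × V}
    (hp : isLine G p) (T : Finset (V × V)) :
    globalContract (contractLine G p.1 p.2) T = globalContract G (insert p T) := by
  have hfuel (S : Finset (V × V)) : (endpoints S).card < 2 * S.card + 2 := by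
    have := card_endpoints_le S; omega
  have hfuel' := hfuel (insert p T)
  rw [endpoints_insert] at hfuel'
  simp only [globalContract, endpoints_insert, PreGraph.mk.injEq]
  refine ⟨?_, funext fun c => funext fun a => ?_⟩
  · ext
    simp only [contractLine, Finset.mem_sdiff, Finset.mem_insert, Finset.mem_singleton, not_or]
    tauto
  by_cases ha : a ∈ endpoints T
  · simp [ha]
  by_cases hp' : a = p.1 ∨ a = p.2
  · rw [if_neg ha, if_pos (by simp only [Finset.mem_insert]; tauto)]
    exact chase_eq_none_of_edge_eq_none (by simp [contractLine, reconnect, hp'])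
  rw [not_or] at hp'
  simp only [ha, hp', Finset.mem_insert, false_or, if_false]
  refine Option.ext fun b => ?_
  rw [chase_eq_some_iff (hfuel T), chase_eq_some_iff hfuel']
  exact faceExit_contractLine_iff hG hp hp'.1 hp'.2

theorem contractList_eq_globalContract {l : List (V × V)}
    (hG : ∀ c, IsPartialMatching (G.edge c)) (hl : ∀ p ∈ l, isLine G p)
    (hdisj : l.Pairwise fun p q => p.1 ≠ q.1 ∧ p.1 ≠ q.2 ∧ p.2 ≠ q.1 ∧ p.2 ≠ q.2) :
    contractList G l = globalContract G l.toFinset := by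
  induction l generalizing G with
  | nil => exact (globalContract_empty G).symm
  | cons p r ih =>
    have hp := hl p List.mem_cons_self
    obtain ⟨hpr, hdisj⟩ := List.pairwise_cons.mp hdisj
    have hr (q : V × V) (hq : q ∈ r) : isLine (contractLine G p.1 p.2) q :=
      (contractLine_edge_zero (hG 0) hp (hpr q hq).1.symm (hpr q hq).2.2.1.symm).trans
        (hl q (List.mem_cons_of_mem p hq))
    rw [contractList, ih (fun c => reconnect_isPartialMatching (hG c) ((hG 0).ne_of_eq_some hp))
      hr hdisj, globalContract_contractLine hG hp, List.toFinset_cons]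

end GlobalContract

theorem subgraph_contraction_well_defined_general {d : ℕ} {V : Type} [DecidableEq V]
    (G : PreGraph d V) (hG : isColored G)
    (l₁ l₂ : List (V × V)) (hperm : l₁.Perm l₂)
    (hlines : ∀ p ∈ l₁, isLine G p)
    (hdisj : l₁.Pairwise fun p q => p.1 ≠ q.1 ∧ p.1 ≠ q.2 ∧ p.2 ≠ q.1 ∧ p.2 ≠ q.2) :
    contractList G l₁ = contractList G l₂ ∧
      contractList G l₁ = globalContract G l₁.toFinset := by
  have h₁ := contractList_eq_globalContract hG.isPartialMatching hlines hdisj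
  have h₂ := contractList_eq_globalContract hG.isPartialMatching
    (fun p hp => hlines p (hperm.mem_iff.mpr hp))
    (hperm.pairwise hdisj fun ⟨h₁, h₂, h₃, h₄⟩ => ⟨h₁.symm, h₃.symm, h₂.symm, h₄.symm⟩)
  exact ⟨by rw [h₁, h₂, List.toFinset_eq_of_perm _ _ hperm], h₁⟩

/-- **Contraction of a subgraph is well defined and admits a global characterization**:
successively contracting the lines of a subgraph `H` (in any order) yields the same
graph `G/H`, and `G/H` is obtained by deleting all faces of `G` internal to `H` and
replacing every external face of the colored extension `H_c` by a single line of the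
corresponding color. -/
theorem subgraph_contraction_well_defined {d : ℕ} {V : Type} [DecidableEq V]
    (G : PreGraph d V) (hG : isColored G)
    (l₁ l₂ : List (V × V)) (hperm : l₁.Perm l₂)
    (hlines : ∀ p ∈ l₁, isLine G p)
    (hnodup : l₁.Nodup)
    (hdisj : l₁.Pairwise fun p q => p.1 ≠ q.1 ∧ p.1 ≠ q.2 ∧ p.2 ≠ q.1 ∧ p.2 ≠ q.2) :
    contractList G l₁ = contractList G l₂ ∧
      contractList G l₁ = globalContract G l₁.toFinset :=
  subgraph_contraction_well_defined_general G hG l₁ l₂ hperm hlines hdisj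
end

section
/- If G is a connected TGFT graph (connected in the sense that its line-face incidence matrix does not factorize into blocks) and e is a line of G contained in a d-dipole, then the contracted graph G/e is connected. -/
variable {d : ℕ} {V : Type}

/-!
A face of `G` keeps its lines other than the dipole `(n, m)` after the contraction: a face of a
color shared by `n` and `m` either avoids both nodes or is the trivial face through one of them,
and a face of the unique unshared color merely skips `n` and `m`. So every face relation between
lines other than `(n, m)` survives. The lines sharing a face with the dipole lie on faces of the
unshared color through `n` or `m`; these are mirror images of each other under the color matching,
cross the same lines, and hence leave all those lines on a single face of `G / (n, m)`. Collapsing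
the dipole onto one of them turns a chain of face relations in `G` into one in `G / (n, m)`.
-/

theorem pairMatch_symm {p q : V × V} (h : pairMatch p q) : pairMatch q p := by
  rcases h with rfl | rfl
  · exact Or.inl rfl
  · exact Or.inr rfl

theorem pairMatch_trans {p q r : V × V} (h₁ : pairMatch p q) (h₂ : pairMatch q r) :
    pairMatch p r := by
  rcases h₁ with rfl | rfl <;> rcases h₂ with rfl | rfl
  · exact Or.inl rfl
  · exact Or.inr rfl
  · exact Or.inr rfl
  · exact Or.inl rfl

theorem pairMatch_swap (x y : V) : pairMatch (x, y) (y, x) := Or.inr rfl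

section Iterate

variable (G : PreGraph d V) (c : Fin (d + 1))

theorem iterStep_add (j k : ℕ) (a : V) :
    iterStep G c (j + k) a = (iterStep G c j a).bind (iterStep G c k) := by
  induction j generalizing a with
  | zero => simp [iterStep]
  | succ j ih =>
    rw [Nat.add_right_comm]
    cases h : faceStep G c a <;> simp [iterStep, h, ih]

theorem iterStep_one : iterStep G c 1 = faceStep G c := by
  funext a
  cases h : faceStep G c a <;> simp [iterStep, h]

theorem iterStep_succ' (k : ℕ) (a : V) :
    iterStep G c (k + 1) a = (iterStep G c k a).bind (faceStep G c) := by
  rw [iterStep_add, ← iterStep_one]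

variable {G c}

theorem iterStep_mul_eq_self {k : ℕ} {a : V} (h : iterStep G c k a = some a) (t : ℕ) :
    iterStep G c (t * k) a = some a := by
  induction t with
  | zero => simp [iterStep]
  | succ t ih => rw [Nat.succ_mul, iterStep_add, ih, Option.bind_some, h]

theorem iterStep_eq_self_of_faceStep {u : V} (h : faceStep G c u = some u) (t : ℕ) :
    iterStep G c t u = some u := by
  induction t with
  | zero => rfl
  | succ t ih => rw [iterStep_succ', ih, Option.bind_some, h]

theorem iterStep_mod {k : ℕ} {a : V} (h : iterStep G c k a = some a) (t : ℕ) :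
    iterStep G c t a = iterStep G c (t % k) a := by
  conv_lhs => rw [← Nat.div_add_mod' t k]
  rw [iterStep_add, iterStep_mul_eq_self h, Option.bind_some]

end Iterate

def FaceVisits (G : PreGraph d V) (c : Fin (d + 1)) (a b : V) : Prop :=
  ∃ j, iterStep G c j a = some b

def CrossesAt (G : PreGraph d V) (c : Fin (d + 1)) (b : V) (p : V × V) : Prop :=
  ∃ xy, crossedPair G c b = some xy ∧ pairMatch xy p

def OnFace (G : PreGraph d V) (c : Fin (d + 1)) (a : V) (p : V × V) : Prop :=
  ∃ b, FaceVisits G c a b ∧ CrossesAt G c b p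

section Visits

variable {G : PreGraph d V} {c : Fin (d + 1)}

theorem FaceVisits.refl (a : V) : FaceVisits G c a a := ⟨0, rfl⟩

theorem FaceVisits.of_faceStep {a b : V} (h : faceStep G c a = some b) : FaceVisits G c a b :=
  ⟨1, by rw [iterStep_one, h]⟩

theorem FaceVisits.trans {a b e : V} (h₁ : FaceVisits G c a b) (h₂ : FaceVisits G c b e) :
    FaceVisits G c a e := by
  obtain ⟨j₁, h₁⟩ := h₁
  obtain ⟨j₂, h₂⟩ := h₂
  exact ⟨j₁ + j₂, by rw [iterStep_add, h₁, Option.bind_some, h₂]⟩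

theorem FaceVisits.iterStep_eq_self {k : ℕ} {a b : V} (hv : FaceVisits G c a b)
    (hper : iterStep G c k a = some a) : iterStep G c k b = some b := by
  obtain ⟨j, hj⟩ := hv
  have h : iterStep G c (j + k) a = iterStep G c k b := by rw [iterStep_add, hj, Option.bind_some]
  rw [← h, Nat.add_comm, iterStep_add, hper, Option.bind_some, hj]

theorem FaceVisits.closedFace {k : ℕ} {a b : V} (hv : FaceVisits G c a b)
    (hcf : ClosedFace G c a k) : ClosedFace G c b k :=
  ⟨hcf.1, hv.iterStep_eq_self hcf.2⟩

theorem FaceVisits.eq_of_faceStep {k : ℕ} {a u : V} (hv : FaceVisits G c a u)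
    (hcf : ClosedFace G c a k) (hu : faceStep G c u = some u) : a = u := by
  obtain ⟨j, hj⟩ := hv
  have hle : j ≤ (j + 1) * k := by nlinarith [hcf.1]
  have h := iterStep_mul_eq_self hcf.2 (j + 1)
  rwa [← Nat.add_sub_cancel' hle, iterStep_add, hj, Option.bind_some,
    iterStep_eq_self_of_faceStep hu, Option.some_inj, eq_comm] at h

theorem faceCrosses_iff_onFace {a : V} {k : ℕ} (hcf : ClosedFace G c a k) (p : V × V) :
    FaceCrosses G c a k p ↔ OnFace G c a p := by
  constructor
  · rintro ⟨j, -, b, hb, hx⟩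
    exact ⟨b, ⟨j, hb⟩, hx⟩
  · rintro ⟨b, ⟨j, hj⟩, hx⟩
    exact ⟨j % k, Nat.mod_lt _ hcf.1, b, by rwa [← iterStep_mod hcf.2], hx⟩

theorem crossedPair_eq_some {b x y : V} :
    crossedPair G c b = some (x, y) ↔ G.edge c b = some x ∧ G.edge 0 x = some y := by
  unfold crossedPair
  cases h : G.edge c b with
  | none => simp
  | some x' => cases h0 : G.edge 0 x' <;> aesop

theorem faceStep_eq_of_crossedPair {b x y : V} (h : crossedPair G c b = some (x, y)) :
    faceStep G c b = some y := by
  obtain ⟨he, he0⟩ := crossedPair_eq_some.mp h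
  simp [faceStep, he, he0]

end Visits

namespace isColored

variable {G : PreGraph d V} {c : Fin (d + 1)}

theorem edge_symm (hG : isColored G) {a b : V} (h : G.edge c a = some b) :
    G.edge c b = some a :=
  hG.1 c a b h

theorem edge_ne_self (hG : isColored G) {a : V} : G.edge c a ≠ some a := hG.2.2.1 c a

theorem exists_edge (hG : isColored G) (hc : c ≠ 0) {a b : V} (h : G.edge 0 a = some b) :
    ∃ b', G.edge c b = some b' :=
  Option.isSome_iff_exists.mp (hG.2.2.2 c hc b (hG.2.1 0 a b h).2)

theorem edge_injective (hG : isColored G) {x y u : V} (hx : G.edge c x = some u)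
    (hy : G.edge c y = some u) : x = y :=
  Option.some_inj.mp ((hG.edge_symm hx).symm.trans (hG.edge_symm hy))

theorem faceStep_injective (hG : isColored G) {x y u : V} (hx : faceStep G c x = some u)
    (hy : faceStep G c y = some u) : x = y := by
  obtain ⟨a, ha, ha'⟩ := Option.bind_eq_some_iff.mp hx
  obtain ⟨b, hb, hb'⟩ := Option.bind_eq_some_iff.mp hy
  obtain rfl := hG.edge_injective ha' hb'
  exact hG.edge_injective ha hb

end isColored

section Faces

variable {G : PreGraph d V} {c : Fin (d + 1)}

theorem FaceVisits.symm (hG : isColored G) {k : ℕ} {w u : V} (h : FaceVisits G c w u)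
    (hcf : ClosedFace G c u k) : FaceVisits G c u w := by
  obtain ⟨t, ht⟩ := h
  induction t generalizing w with
  | zero => cases ht; exact .refl _
  | succ t ih =>
    obtain ⟨r, hr, hru⟩ := Option.bind_eq_some_iff.mp ht
    have hur : FaceVisits G c u r := ih hru
    obtain ⟨k', rfl⟩ : ∃ k', k = k' + 1 := ⟨k - 1, by have := hcf.1; omega⟩
    have hrper := hur.iterStep_eq_self hcf.2
    rw [iterStep_succ'] at hrper
    obtain ⟨w', hw', hw'r⟩ := Option.bind_eq_some_iff.mp hrper
    obtain rfl := hG.faceStep_injective hw'r hr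
    exact hur.trans ⟨k', hw'⟩

theorem FaceVisits.of_faceStep_eq (hG : isColored G) {a u v : V} (h : FaceVisits G c a u)
    (hau : a ≠ u) (hvu : faceStep G c v = some u) : FaceVisits G c a v := by
  obtain ⟨j, hj⟩ := h
  cases j with
  | zero => cases hj; exact absurd rfl hau
  | succ j =>
    rw [iterStep_succ'] at hj
    obtain ⟨r, hr, hru⟩ := Option.bind_eq_some_iff.mp hj
    exact hG.faceStep_injective hru hvu ▸ ⟨j, hr⟩

theorem OnFace.rebase (hG : isColored G) {k : ℕ} {a b : V} {p : V × V}
    (hcf : ClosedFace G c a k) (hab : FaceVisits G c a b) (h : OnFace G c a p) :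
    OnFace G c b p := by
  obtain ⟨v, hv, hcv⟩ := h
  exact ⟨v, (hab.symm hG (hab.closedFace hcf)).trans hv, hcv⟩

theorem ClosedFace.exists_faceStep {a : V} {k : ℕ} (hcf : ClosedFace G c a k) :
    ∃ w, faceStep G c a = some w := by
  obtain ⟨k', rfl⟩ : ∃ k', k = 1 + k' := ⟨k - 1, by have := hcf.1; omega⟩
  have h := hcf.2
  rw [iterStep_add, iterStep_one] at h
  obtain ⟨w, hw, -⟩ := Option.bind_eq_some_iff.mp h
  exact ⟨w, hw⟩

/-- Conjugating by the color-`c` matching reverses the face permutation: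
`σ_c ∘ (σ_0 ∘ σ_c) ∘ σ_c = σ_c ∘ σ_0`. -/
theorem iterStep_edge_of_iterStep (hG : isColored G) (hc : c ≠ 0) {y yh : V}
    (hy : G.edge c y = some yh) (j : ℕ) {x xh : V} (h : iterStep G c j x = some y)
    (hx : G.edge c x = some xh) : iterStep G c j yh = some xh := by
  induction j generalizing x xh with
  | zero =>
    cases h
    rw [hy] at hx
    cases hx
    rfl
  | succ j ih =>
    obtain ⟨z, hz, hzy⟩ := Option.bind_eq_some_iff.mp h
    obtain ⟨x₁, hx₁, hx₁z⟩ := Option.bind_eq_some_iff.mp hz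
    obtain rfl : x₁ = xh := Option.some_inj.mp (hx₁.symm.trans hx)
    obtain ⟨zh, hzh⟩ := hG.exists_edge hc hx₁z
    rw [iterStep_succ', ih hzy hzh, Option.bind_some]
    simp [faceStep, hG.edge_symm hzh, hG.edge_symm hx₁z]

theorem CrossesAt.of_faceStep (hG : isColored G) {v z zh : V} {p : V × V}
    (hvz : faceStep G c v = some z) (hzh : G.edge c z = some zh) (h : CrossesAt G c v p) :
    CrossesAt G c zh p := by
  obtain ⟨⟨x, y⟩, hxy, hpm⟩ := h
  obtain rfl : y = z := Option.some_inj.mp ((faceStep_eq_of_crossedPair hxy).symm.trans hvz)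
  obtain ⟨he, he0⟩ := crossedPair_eq_some.mp hxy
  exact ⟨(y, x), crossedPair_eq_some.mpr ⟨hG.edge_symm hzh, hG.edge_symm he0⟩,
    pairMatch_trans (pairMatch_swap y x) hpm⟩

theorem ClosedFace.of_edge (hG : isColored G) (hc : c ≠ 0) {k : ℕ} {u uh : V}
    (hu : G.edge c u = some uh) (hcf : ClosedFace G c u k) : ClosedFace G c uh k :=
  ⟨hcf.1, iterStep_edge_of_iterStep hG hc hu k hcf.2 hu⟩

theorem OnFace.of_edge (hG : isColored G) (hc : c ≠ 0) {k : ℕ} {u uh : V} {p : V × V}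
    (hu : G.edge c u = some uh) (hcf : ClosedFace G c u k) (h : OnFace G c u p) :
    OnFace G c uh p := by
  obtain ⟨b, ⟨j, hj⟩, ⟨x, z⟩, hxz, hpm⟩ := h
  have hbz := faceStep_eq_of_crossedPair hxz
  obtain ⟨zh, hzh⟩ := hG.exists_edge hc (crossedPair_eq_some.mp hxz).2
  have hz : iterStep G c (j + 1) u = some z := by rw [iterStep_succ', hj, Option.bind_some, hbz]
  have hzu : FaceVisits G c zh uh := ⟨j + 1, iterStep_edge_of_iterStep hG hc hzh _ hz hu⟩
  exact ⟨zh, hzu.symm hG (hcf.of_edge hG hc hu),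
    CrossesAt.of_faceStep hG hbz hzh ⟨(x, z), hxz, hpm⟩⟩

end Faces

section Reconnect

variable [DecidableEq V] {e : V → Option V} {n m a : V}

theorem reconnect_comm (e : V → Option V) (n m : V) : reconnect e n m = reconnect e m n := by
  funext a
  unfold reconnect
  cases e a with
  | none => simp [or_comm]
  | some x =>
    by_cases hxn : x = n
    · subst hxn
      by_cases hxm : x = m
      · subst hxm; rfl
      · simp [hxm, or_comm]
    · simp [hxn, or_comm]

theorem contractLine_comm (G : PreGraph d V) (n m : V) :
    contractLine G n m = contractLine G m n := by
  simp only [contractLine, Finset.pair_comm n m, reconnect_comm _ n m]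

theorem ne_of_reconnect_eq_some {b : V} (h : reconnect e n m a = some b) :
    a ≠ n ∧ a ≠ m ∧ b ≠ n ∧ b ≠ m := by
  unfold reconnect at h
  split_ifs at h with ha
  push Not at ha
  refine ⟨ha.1, ha.2, ?_⟩
  split at h
  · cases h
  · split_ifs at h <;> (try split at h) <;> (try split_ifs at h) <;> simp_all

theorem reconnect_of_ne (ha : a ≠ n ∧ a ≠ m) {x : V} (hx : e a = some x) (hxn : x ≠ n ∧ x ≠ m) :
    reconnect e n m a = some x := by
  simp [reconnect, ha, hx, hxn]

theorem reconnect_of_eq_left (ha : a ≠ n ∧ a ≠ m) (hx : e a = some n) {y : V}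
    (hy : e m = some y) (hyn : y ≠ n ∧ y ≠ m) : reconnect e n m a = some y := by
  simp [reconnect, ha, hx, hy, hyn]

end Reconnect

theorem edge_zero_ne_of_ne {G : PreGraph d V} {n m : V} (hG : isColored G)
    (hline : G.edge 0 n = some m) {x y : V}
    (hx : x ≠ n ∧ x ≠ m) (h : G.edge 0 x = some y) : y ≠ n ∧ y ≠ m := by
  constructor
  · rintro rfl
    exact hx.2 (Option.some_inj.mp ((hG.edge_symm h).symm.trans hline))
  · rintro rfl
    exact hx.1 (Option.some_inj.mp ((hG.edge_symm h).symm.trans (hG.edge_symm hline)))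

section Dipole

variable [DecidableEq V] {G : PreGraph d V} {c : Fin (d + 1)} {n m : V}

theorem contractLine_edge_zero_s5 (hG : isColored G) (hline : G.edge 0 n = some m) {x y : V}
    (hx : x ≠ n ∧ x ≠ m) (h : G.edge 0 x = some y) : (contractLine G n m).edge 0 x = some y :=
  reconnect_of_ne hx h (edge_zero_ne_of_ne hG hline hx h)

theorem faceStep_contractLine_of_ne (hG : isColored G) (hline : G.edge 0 n = some m) {a b : V}
    (ha : a ≠ n ∧ a ≠ m) (h : faceStep G c a = some b) (hb : b ≠ n ∧ b ≠ m) :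
    faceStep (contractLine G n m) c a = some b := by
  obtain ⟨x, hx, hxb⟩ := Option.bind_eq_some_iff.mp h
  have hxnm : x ≠ n ∧ x ≠ m := by
    refine ⟨?_, ?_⟩ <;> rintro rfl
    · exact hb.2 (Option.some_inj.mp (hxb.symm.trans hline))
    · exact hb.1 (Option.some_inj.mp (hxb.symm.trans (hG.edge_symm hline)))
  show (reconnect (G.edge c) n m a).bind (reconnect (G.edge 0) n m) = some b
  rw [reconnect_of_ne ha hx hxnm, Option.bind_some]
  exact contractLine_edge_zero_s5 hG hline hxnm hxb

theorem faceStep_contractLine_of_eq_right (hG : isColored G) (hline : G.edge 0 n = some m)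
    {a w : V} (ha : a ≠ n ∧ a ≠ m) (h : faceStep G c a = some m)
    (hw : faceStep G c m = some w) :
    faceStep (contractLine G n m) c a = some w := by
  obtain ⟨x, hx, hxm⟩ := Option.bind_eq_some_iff.mp h
  have hxn : x = n := Option.some_inj.mp ((hG.edge_symm hxm).symm.trans (hG.edge_symm hline))
  rw [hxn] at hx
  obtain ⟨y, hy, hyw⟩ := Option.bind_eq_some_iff.mp hw
  have hynm : y ≠ n ∧ y ≠ m := by
    refine ⟨?_, fun hym => hG.edge_ne_self (hym ▸ hy)⟩
    rintro rfl
    exact ha.2 (Option.some_inj.mp ((hG.edge_symm hx).symm.trans (hG.edge_symm hy)))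
  show (reconnect (G.edge c) n m a).bind (reconnect (G.edge 0) n m) = some w
  rw [reconnect_of_eq_left ha hx hy hynm, Option.bind_some]
  exact contractLine_edge_zero_s5 hG hline hynm hyw

theorem faceStep_contractLine_of_mem (hG : isColored G) (hline : G.edge 0 n = some m)
    {a b w : V} (ha : a ≠ n ∧ a ≠ m) (h : faceStep G c a = some b) (hb : b = n ∨ b = m)
    (hw : faceStep G c b = some w) : faceStep (contractLine G n m) c a = some w := by
  rcases hb with rfl | rfl
  · rw [contractLine_comm]
    exact faceStep_contractLine_of_eq_right hG (hG.edge_symm hline) ha.symm h hw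
  · exact faceStep_contractLine_of_eq_right hG hline ha h hw

theorem crossesAt_contractLine_of_ne (hG : isColored G) (hline : G.edge 0 n = some m)
    {b : V} {p : V × V} (hb : b ≠ n ∧ b ≠ m) (h : CrossesAt G c b p)
    (hp : ¬ pairMatch p (n, m)) : CrossesAt (contractLine G n m) c b p := by
  obtain ⟨⟨x, y⟩, hxy, hpm⟩ := h
  obtain ⟨hx, hxy'⟩ := crossedPair_eq_some.mp hxy
  have hxnm : x ≠ n ∧ x ≠ m := by
    refine ⟨?_, ?_⟩ <;> rintro rfl
    · obtain rfl := Option.some_inj.mp (hxy'.symm.trans hline)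
      exact hp (pairMatch_symm hpm)
    · obtain rfl := Option.some_inj.mp (hxy'.symm.trans (hG.edge_symm hline))
      exact hp (pairMatch_trans (pairMatch_symm hpm) (pairMatch_swap _ _))
  refine ⟨(x, y), crossedPair_eq_some.mpr ⟨reconnect_of_ne hb hx hxnm, ?_⟩, hpm⟩
  exact contractLine_edge_zero_s5 hG hline hxnm hxy'

theorem crossesAt_contractLine_of_left (hG : isColored G) (hline : G.edge 0 n = some m)
    (hcns : G.edge c n ≠ some m) {m' : V} {p : V × V} (hm' : G.edge c m = some m')
    (h : CrossesAt G c n p) : CrossesAt (contractLine G n m) c m' p := by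
  obtain ⟨⟨x, y⟩, hxy, hpm⟩ := h
  obtain ⟨hx, hxy'⟩ := crossedPair_eq_some.mp hxy
  have hxnm : x ≠ n ∧ x ≠ m := ⟨fun h => hG.edge_ne_self (h ▸ hx), fun h => hcns (h ▸ hx)⟩
  have hm'nm : m' ≠ n ∧ m' ≠ m :=
    ⟨fun h => hcns (hG.edge_symm (h ▸ hm')), fun h => hG.edge_ne_self (h ▸ hm')⟩
  refine ⟨(x, y), crossedPair_eq_some.mpr ⟨?_, contractLine_edge_zero_s5 hG hline hxnm hxy'⟩, hpm⟩
  show reconnect (G.edge c) n m m' = some x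
  rw [reconnect_comm]
  exact reconnect_of_eq_left hm'nm.symm (hG.edge_symm hm') hx hxnm.symm

theorem isLine_of_isLine_contractLine (hG : isColored G) (hline : G.edge 0 n = some m)
    {p : V × V} (hp : isLine (contractLine G n m) p) : isLine G p ∧ ¬ pairMatch p (n, m) := by
  obtain ⟨hp₁n, hp₁m, -⟩ := ne_of_reconnect_eq_some hp
  refine ⟨?_, by rintro (rfl | rfl) <;> simp_all⟩
  cases h : G.edge 0 p.1 with
  | none => simp [isLine, contractLine, reconnect, h] at hp
  | some z =>
    have hp' : reconnect (G.edge 0) n m p.1 = some p.2 := hp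
    rw [reconnect_of_ne ⟨hp₁n, hp₁m⟩ h (edge_zero_ne_of_ne hG hline ⟨hp₁n, hp₁m⟩ h)] at hp'
    exact h.trans hp'

end Dipole

section Transfer

variable {G : PreGraph d V} {c : Fin (d + 1)} {n m : V}

theorem faceStep_ne_of_unshared (hG : isColored G) (hline : G.edge 0 n = some m)
    (hcns : G.edge c n ≠ some m) {b w : V} (hb : b = n ∨ b = m)
    (h : faceStep G c b = some w) : w ≠ n ∧ w ≠ m := by
  obtain ⟨x, hx, hxw⟩ := Option.bind_eq_some_iff.mp h
  rcases hb with rfl | rfl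
  · exact edge_zero_ne_of_ne hG hline
      ⟨fun h => hG.edge_ne_self (h ▸ hx), fun h => hcns (h ▸ hx)⟩ hxw
  · exact (edge_zero_ne_of_ne hG (hG.edge_symm hline)
      ⟨fun h => hG.edge_ne_self (h ▸ hx), fun h => hcns (hG.edge_symm (h ▸ hx))⟩ hxw).symm

theorem faceStep_eq_self_of_shared (hG : isColored G) (hline : G.edge 0 n = some m)
    (hsh : G.edge c n = some m) : faceStep G c n = some n := by
  simp [faceStep, hsh, hG.edge_symm hline]

/-- For a color shared by the two end nodes, `n` and `m` are fixed points of the face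
permutation. -/
theorem pairMatch_of_onFace_of_shared (hG : isColored G) (hline : G.edge 0 n = some m)
    (hsh : G.edge c n = some m) {a : V} {k : ℕ} {p : V × V} (hcf : ClosedFace G c a k)
    (hv : FaceVisits G c a n ∨ FaceVisits G c a m) (h : OnFace G c a p) : pairMatch p (n, m) := by
  have key : ∀ {u v : V}, G.edge 0 u = some v → G.edge c u = some v → FaceVisits G c a u →
      pairMatch p (u, v) := by
    intro u v hl hs hv
    have hfix := faceStep_eq_self_of_shared hG hl hs
    have hau : a = u := hv.eq_of_faceStep hcf hfix
    obtain ⟨b, ⟨j, hj⟩, xy, hxy, hpm⟩ := h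
    rw [hau, iterStep_eq_self_of_faceStep hfix, Option.some_inj] at hj
    rw [← hj, crossedPair_eq_some.mpr ⟨hs, hG.edge_symm hl⟩, Option.some_inj] at hxy
    rw [← hxy] at hpm
    exact pairMatch_trans (pairMatch_symm hpm) (pairMatch_swap v u)
  rcases hv with hv | hv
  · exact key hline hsh hv
  · exact pairMatch_trans (key (hG.edge_symm hline) (hG.edge_symm hsh) hv) (pairMatch_swap m n)

theorem OnFace.faceVisits_of_pairMatch {a : V} {p : V × V} (h : OnFace G c a p)
    (hp : pairMatch p (n, m)) : FaceVisits G c a n ∨ FaceVisits G c a m := by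
  obtain ⟨b, hab, ⟨x, y⟩, hxy, hpm⟩ := h
  have hby := hab.trans (FaceVisits.of_faceStep (faceStep_eq_of_crossedPair hxy))
  rcases pairMatch_trans hpm hp with h | h <;> simp only [Prod.mk.injEq] at h <;>
    rw [h.2] at hby
  · exact Or.inr hby
  · exact Or.inl hby

/-- The color-`c` matching carries the face through `n` onto the face through its partner `n'`,
which reaches `m` in one step. -/
theorem onFace_end_of_faceVisits (hG : isColored G) (hline : G.edge 0 n = some m) (hc : c ≠ 0)
    {a : V} {k : ℕ} (hcf : ClosedFace G c a k) (hv : FaceVisits G c a n ∨ FaceVisits G c a m) :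
    ClosedFace G c m k ∧ ∀ p, OnFace G c a p → OnFace G c m p := by
  rcases hv with hv | hv
  · obtain ⟨n', hn'⟩ := hG.exists_edge hc (hG.edge_symm hline)
    have hcfn := hv.closedFace hcf
    have hcfn' := hcfn.of_edge hG hc hn'
    have hn'm : FaceVisits G c n' m :=
      .of_faceStep (by simp [faceStep, hG.edge_symm hn', hline])
    exact ⟨hn'm.closedFace hcfn', fun p h =>
      ((h.rebase hG hcf hv).of_edge hG hc hn' hcfn).rebase hG hcfn' hn'm⟩
  · exact ⟨hv.closedFace hcf, fun p h => h.rebase hG hcf hv⟩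

variable [DecidableEq V]

theorem exists_iterStep_contractLine (hG : isColored G) (hline : G.edge 0 n = some m)
    (hcns : G.edge c n ≠ some m) {a : V} (ha : a ≠ n ∧ a ≠ m) (j : ℕ) :
    ∀ b, iterStep G c j a = some b → b ≠ n ∧ b ≠ m →
      ∃ j', (0 < j → 0 < j') ∧ iterStep (contractLine G n m) c j' a = some b := by
  induction j using Nat.strong_induction_on with
  | _ j ih =>
  intro b hb hbnm
  match j, hb with
  | 0, hb => exact ⟨0, by simp, hb⟩
  | j + 1, hb =>
    obtain ⟨r, hr, hrb⟩ := Option.bind_eq_some_iff.mp ((iterStep_succ' G c j a).symm.trans hb)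
    by_cases hrnm : r ≠ n ∧ r ≠ m
    · obtain ⟨j', -, hj'⟩ := ih j (by omega) r hr hrnm
      refine ⟨j' + 1, fun _ => by omega, ?_⟩
      rw [iterStep_succ', hj', Option.bind_some]
      exact faceStep_contractLine_of_ne hG hline hrnm hrb hbnm
    · have hrnm' : r = n ∨ r = m := by tauto
      match j, hr with
      | 0, hr => cases hr; exact absurd ha hrnm
      | j + 1, hr =>
        obtain ⟨r₂, hr₂, hr₂r⟩ :=
          Option.bind_eq_some_iff.mp ((iterStep_succ' G c j a).symm.trans hr)
        have hr₂nm : r₂ ≠ n ∧ r₂ ≠ m := by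
          by_contra hcon
          exact hrnm (faceStep_ne_of_unshared hG hline hcns (by tauto) hr₂r)
        obtain ⟨j', -, hj'⟩ := ih j (by omega) r₂ hr₂ hr₂nm
        refine ⟨j' + 1, fun _ => by omega, ?_⟩
        rw [iterStep_succ', hj', Option.bind_some]
        exact faceStep_contractLine_of_mem hG hline hr₂nm hr₂r hrnm' hrb

end Transfer

section Contraction

variable [DecidableEq V] {G : PreGraph d V} {c : Fin (d + 1)} {n m : V}

theorem FaceVisits.contractLine_of_unshared (hG : isColored G) (hline : G.edge 0 n = some m)
    (hcns : G.edge c n ≠ some m) {a b : V} (ha : a ≠ n ∧ a ≠ m) (hb : b ≠ n ∧ b ≠ m)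
    (h : FaceVisits G c a b) : FaceVisits (contractLine G n m) c a b := by
  obtain ⟨j, hj⟩ := h
  obtain ⟨j', -, hj'⟩ := exists_iterStep_contractLine hG hline hcns ha j b hj hb
  exact ⟨j', hj'⟩

/-- A line crossed at the deleted node `n` is crossed in `G / (n, m)` at `m'`, the color-`c`
partner of `m`, which precedes `n` on the face. -/
theorem onFace_contractLine_of_crossesAt_left (hG : isColored G) (hline : G.edge 0 n = some m)
    (hc : c ≠ 0) (hcns : G.edge c n ≠ some m) {a : V} {p : V × V} (ha : a ≠ n ∧ a ≠ m)
    (hv : FaceVisits G c a n) (h : CrossesAt G c n p) : OnFace (contractLine G n m) c a p := by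
  obtain ⟨m', hm'⟩ := hG.exists_edge hc hline
  have hm'nm : m' ≠ n ∧ m' ≠ m :=
    ⟨fun h => hcns (hG.edge_symm (h ▸ hm')), fun h => hG.edge_ne_self (h ▸ hm')⟩
  have hvm' : FaceVisits G c a m' :=
    hv.of_faceStep_eq hG ha.1 (by simp [faceStep, hG.edge_symm hm', hG.edge_symm hline])
  exact ⟨m', hvm'.contractLine_of_unshared hG hline hcns ha hm'nm,
    crossesAt_contractLine_of_left hG hline hcns hm' h⟩

theorem ClosedFace.contractLine_of_unshared (hG : isColored G) (hline : G.edge 0 n = some m)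
    (hc : c ≠ 0) (hcns : G.edge c n ≠ some m) {a : V} {k : ℕ} (ha : a ≠ n ∧ a ≠ m)
    (hcf : ClosedFace G c a k) :
    ∃ K, ClosedFace (contractLine G n m) c a K ∧
      ∀ p, ¬ pairMatch p (n, m) → OnFace G c a p → OnFace (contractLine G n m) c a p := by
  obtain ⟨K, hK, hKa⟩ := exists_iterStep_contractLine hG hline hcns ha k a hcf.2 ha
  refine ⟨K, ⟨hK hcf.1, hKa⟩, fun p hp ⟨b, hab, hb⟩ => ?_⟩
  by_cases hbn : b = n
  · subst hbn
    exact onFace_contractLine_of_crossesAt_left hG hline hc hcns ha hab hb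
  by_cases hbm : b = m
  · subst hbm
    rw [contractLine_comm]
    exact onFace_contractLine_of_crossesAt_left hG (hG.edge_symm hline) hc
      (fun h => hcns (hG.edge_symm h)) ha.symm hab hb
  exact ⟨b, hab.contractLine_of_unshared hG hline hcns ha ⟨hbn, hbm⟩,
    crossesAt_contractLine_of_ne hG hline ⟨hbn, hbm⟩ hb hp⟩

theorem ClosedFace.contractLine_of_shared (hG : isColored G) (hline : G.edge 0 n = some m)
    (hsh : G.edge c n = some m) {a : V} {k : ℕ} (ha : a ≠ n ∧ a ≠ m)
    (hcf : ClosedFace G c a k) :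
    ClosedFace (contractLine G n m) c a k ∧
      ∀ p, ¬ pairMatch p (n, m) → OnFace G c a p → OnFace (contractLine G n m) c a p := by
  have havoid : ∀ b, FaceVisits G c a b → b ≠ n ∧ b ≠ m := fun b hb =>
    ⟨fun h => ha.1 ((h ▸ hb).eq_of_faceStep hcf (faceStep_eq_self_of_shared hG hline hsh)),
     fun h => ha.2 ((h ▸ hb).eq_of_faceStep hcf
      (faceStep_eq_self_of_shared hG (hG.edge_symm hline) (hG.edge_symm hsh)))⟩
  have hiter : ∀ j b, iterStep G c j a = some b →
      iterStep (contractLine G n m) c j a = some b := by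
    intro j
    induction j with
    | zero => exact fun b hb => hb
    | succ j ih =>
      intro b hb
      obtain ⟨r, hr, hrb⟩ := Option.bind_eq_some_iff.mp ((iterStep_succ' G c j a).symm.trans hb)
      rw [iterStep_succ', ih r hr, Option.bind_some]
      exact faceStep_contractLine_of_ne hG hline (havoid r ⟨j, hr⟩) hrb (havoid b ⟨j + 1, hb⟩)
  exact ⟨⟨hcf.1, hiter k a hcf.2⟩, fun p hp ⟨b, ⟨j, hj⟩, hb⟩ =>
    ⟨b, ⟨j, hiter j b hj⟩, crossesAt_contractLine_of_ne hG hline (havoid b ⟨j, hj⟩) hb hp⟩⟩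

theorem ClosedFace.exists_closedFace_contractLine (hG : isColored G)
    (hline : G.edge 0 n = some m) (hc : c ≠ 0) {a : V} {k : ℕ} {z : V × V}
    (hcf : ClosedFace G c a k) (hz : OnFace G c a z) (hzD : ¬ pairMatch z (n, m)) :
    ∃ a' K, ClosedFace (contractLine G n m) c a' K ∧
      ∀ p, ¬ pairMatch p (n, m) → OnFace G c a p → OnFace (contractLine G n m) c a' p := by
  by_cases hsh : G.edge c n = some m
  · have ha : a ≠ n ∧ a ≠ m := by
      refine ⟨fun h => hzD ?_, fun h => hzD ?_⟩ <;>
        refine pairMatch_of_onFace_of_shared hG hline hsh hcf ?_ hz <;> simp [h, FaceVisits.refl]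
    exact ⟨a, k, hcf.contractLine_of_shared hG hline hsh ha⟩
  · obtain ⟨a', ha', haa'⟩ : ∃ a', (a' ≠ n ∧ a' ≠ m) ∧ FaceVisits G c a a' := by
      by_cases ha : a = n ∨ a = m
      · obtain ⟨w, hw⟩ := hcf.exists_faceStep
        exact ⟨w, faceStep_ne_of_unshared hG hline hsh ha hw, .of_faceStep hw⟩
      · exact ⟨a, not_or.mp ha, .refl a⟩
    obtain ⟨K, hcfK, hon⟩ := (haa'.closedFace hcf).contractLine_of_unshared hG hline hc hsh ha'
    exact ⟨a', K, hcfK, fun p hp h => hon p hp (h.rebase hG hcf haa')⟩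

end Contraction

/-- Collapse `S` onto one point `ℓ` outside `S` that is `R`-adjacent to `S`: every `R`-step
then becomes an `R'`-step or a trivial one. -/
theorem Relation.EqvGen.of_outside {α : Type*} {R R' : α → α → Prop} {S : Set α}
    (hR : ∀ x y, R x y → R y x) (hout : ∀ x y, x ∉ S → y ∉ S → R x y → R' x y)
    (hnear : ∀ x y s t, x ∉ S → y ∉ S → s ∈ S → t ∈ S → R x s → R y t → R' x y)
    {p q : α} (hp : p ∉ S) (hq : q ∉ S) (h : EqvGen R p q) : EqvGen R' p q := by
  classical
  let ℓ : α := if hℓ : ∃ z ∉ S, ∃ s ∈ S, R z s then hℓ.choose else p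
  let ρ : α → α := fun t => if t ∈ S then ℓ else t
  have hℓ : ∀ y s, y ∉ S → s ∈ S → R y s → R' ℓ y := by
    intro y s hy hs hys
    have hex : ∃ z ∉ S, ∃ s ∈ S, R z s := ⟨y, hy, s, hs, hys⟩
    obtain ⟨hℓS, t, ht, hℓt⟩ := hex.choose_spec
    simp only [ℓ, dif_pos hex]
    exact hnear _ y t s hℓS hy ht hs hℓt hys
  have hstep : ∀ x y, R x y → EqvGen R' (ρ x) (ρ y) := by
    intro x y hxy
    by_cases hx : x ∈ S <;> by_cases hy : y ∈ S <;> simp only [ρ, hx, hy, if_true, if_false]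
    · exact .refl _
    · exact .rel _ _ (hℓ y x hy hx (hR x y hxy))
    · exact .symm _ _ (.rel _ _ (hℓ x y hx hy hxy))
    · exact .rel _ _ (hout x y hx hy hxy)
  have hmap : ∀ x y, EqvGen R x y → EqvGen R' (ρ x) (ρ y) := by
    intro x y h
    induction h with
    | rel x y hxy => exact hstep x y hxy
    | refl => exact .refl _
    | symm _ _ _ ih => exact .symm _ _ ih
    | trans _ _ _ _ _ ih₁ ih₂ => exact .trans _ _ _ ih₁ ih₂
  simpa [ρ, hp, hq] using hmap p q h

theorem wholeFaceRel_symm {G : PreGraph d V} {p q : V × V} (h : WholeFaceRel G p q) :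
    WholeFaceRel G q p := by
  obtain ⟨c, hc, a, k, hcf, hp, hq⟩ := h
  exact ⟨c, hc, a, k, hcf, hq, hp⟩

section Connectedness

variable [DecidableEq V] {G : PreGraph d V} {n m : V}

theorem eq_of_unshared_of_shareCount_eq (hdip : shareCount G n m = d - 1) {c₁ c₂ : Fin (d + 1)}
    (h₁ : c₁ ≠ 0) (h₂ : c₂ ≠ 0) (g₁ : G.edge c₁ n ≠ some m) (g₂ : G.edge c₂ n ≠ some m) :
    c₁ = c₂ := by
  set s := (Finset.univ : Finset (Fin (d + 1))).erase 0
  have hs : s.card = d := by simp [s]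
  have hsplit := Finset.card_filter_add_card_filter_not (s := s) (fun c => G.edge c n = some m)
  have hshared : (s.filter fun c => G.edge c n = some m).card = d - 1 := by
    rw [← hdip, shareCount]
    congr 1
    ext c
    simp [s]
  have hunshared : (s.filter fun c => ¬ G.edge c n = some m).card ≤ 1 := by omega
  exact Finset.card_le_one.mp hunshared _ (by simp [s, h₁, g₁]) _ (by simp [s, h₂, g₂])

theorem wholeFaceRel_contractLine (hG : isColored G) (hline : G.edge 0 n = some m)
    {x y : V × V} (hx : ¬ pairMatch x (n, m)) (hy : ¬ pairMatch y (n, m))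
    (h : WholeFaceRel G x y) : WholeFaceRel (contractLine G n m) x y := by
  obtain ⟨c, hc, a, k, hcf, hfx, hfy⟩ := h
  rw [faceCrosses_iff_onFace hcf] at hfx hfy
  obtain ⟨a', K, hcf', hon⟩ := hcf.exists_closedFace_contractLine hG hline hc hfx hx
  exact ⟨c, hc, a', K, hcf', (faceCrosses_iff_onFace hcf' x).mpr (hon x hx hfx),
    (faceCrosses_iff_onFace hcf' y).mpr (hon y hy hfy)⟩

/-- A face meeting both the dipole and another line has the unique color not shared by `n` and
`m`, and its lines all lie on the face of that color through `m`. -/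
theorem wholeFaceRel_contractLine_of_dipole (hG : isColored G) (hline : G.edge 0 n = some m)
    (hdip : shareCount G n m = d - 1) {x y w w' : V × V} (hx : ¬ pairMatch x (n, m))
    (hy : ¬ pairMatch y (n, m)) (hw : pairMatch w (n, m)) (hw' : pairMatch w' (n, m))
    (h : WholeFaceRel G x w) (h' : WholeFaceRel G y w') :
    WholeFaceRel (contractLine G n m) x y := by
  obtain ⟨c, hc, a, k, hcf, hfx, hfw⟩ := h
  obtain ⟨c', hc', a', k', hcf', hfy, hfw'⟩ := h'
  rw [faceCrosses_iff_onFace hcf] at hfx hfw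
  rw [faceCrosses_iff_onFace hcf'] at hfy hfw'
  have hv := hfw.faceVisits_of_pairMatch hw
  have hv' := hfw'.faceVisits_of_pairMatch hw'
  obtain rfl : c = c' := eq_of_unshared_of_shareCount_eq hdip hc hc'
    (fun hsh => hx (pairMatch_of_onFace_of_shared hG hline hsh hcf hv hfx))
    (fun hsh => hy (pairMatch_of_onFace_of_shared hG hline hsh hcf' hv' hfy))
  obtain ⟨hcfm, hxm⟩ := onFace_end_of_faceVisits hG hline hc hcf hv
  have hym := (onFace_end_of_faceVisits hG hline hc hcf' hv').2 y hfy
  obtain ⟨b, K, hcfK, hon⟩ := hcfm.exists_closedFace_contractLine hG hline hc (hxm x hfx) hx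
  exact ⟨c, hc, b, K, hcfK, (faceCrosses_iff_onFace hcfK x).mpr (hon x hx (hxm x hfx)),
    (faceCrosses_iff_onFace hcfK y).mpr (hon y hy hym)⟩

end Connectedness

/-- **Contraction of a `d`-dipole preserves connectedness**: if `G` is connected (in the
tensorial, line–face incidence sense) and the line `(n, m)` is a `d`-dipole (its two end
nodes are joined by exactly `d - 1` additional colored lines), then `G/e` is connected. -/
theorem d_dipole_contraction_preserves_connectedness {d : ℕ} {V : Type} [DecidableEq V]
    (G : PreGraph d V) (hG : isColored G) (hconn : GraphConnected G)
    (n m : V) (hline : G.edge 0 n = some m)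
    (hdip : shareCount G n m = d - 1) :
    GraphConnected (contractLine G n m) := by
  intro p q hp hq
  obtain ⟨hpG, hpD⟩ := isLine_of_isLine_contractLine hG hline hp
  obtain ⟨hqG, hqD⟩ := isLine_of_isLine_contractLine hG hline hq
  exact (hconn p q hpG hqG).of_outside (S := {p | pairMatch p (n, m)})
    (fun _ _ => wholeFaceRel_symm)
    (fun _ _ hx hy => wholeFaceRel_contractLine hG hline hx hy)
    (fun _ _ _ _ hx hy hs ht => wholeFaceRel_contractLine_of_dipole hG hline hdip hx hy hs ht)
    hpD hqD
end

section
/- Rank lower bound from dipoles: for a connected subgraph H of a rank-4 TGFT graph, the rank r(H) of the line–internal-face incidence matrix ε_{ef} satisfies r(H) ≥ D₂(H) + D₃(H) + D₄(H) + D₅(H), where D_p is the number of p-dipole lines of H for p≥2. -/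
open Finset
open scoped Classical

noncomputable section

/-- Support of an internal face: the lines it is incident to (`ε_{ef} ≠ 0`). -/
def faceSupp (Line Face : Type) [Fintype Line] (incid : Face → Line → ℤ) (f : Face) :
    Finset Line :=
  univ.filter fun e => incid f e ≠ 0

/-- Number of `p`-dipole lines: lines carrying exactly `p - 1` internal faces of length
one (a `p`-dipole contains `p - 1` internal faces passing only through it). -/
def nDipoles (Line Face : Type) [Fintype Line] [Fintype Face]
    (incid : Face → Line → ℤ) (p : ℕ) : ℕ :=
  (univ.filter fun e : Line =>
      (univ.filter fun f : Face =>
          incid f e ≠ 0 ∧ (faceSupp Line Face incid f).card = 1).card = p - 1).card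

/-- Rank of the line–(internal-)face incidence matrix `ε_{ef}` (over ℚ). -/
def epsRank (Line Face : Type) [Fintype Line] [Fintype Face]
    (incid : Face → Line → ℤ) : ℕ :=
  Matrix.rank (Matrix.of fun (f : Face) (e : Line) => (incid f e : ℚ))

/- The `D_p`, `p = 2, …, 5`, count disjoint sets of lines, each carrying an internal face of
length one, i.e. a face whose row in `ε` is a nonzero multiple of the indicator of that line.
Choosing one such face per line gives a square submatrix of `ε` that is diagonal with nonzero
diagonal entries, hence of full rank. -/

theorem Matrix.card_le_rank_of_forall_exists_row_support_eq {R m n : Type*} [Field R]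
    [Fintype n] (A : Matrix m n R) (s : Finset n)
    (hs : ∀ j ∈ s, ∃ i, ∀ j', A i j' ≠ 0 ↔ j' = j) :
    s.card ≤ A.rank := by
  classical
  choose row hrow using hs
  set B := A.submatrix (fun j : s => row j.1 j.2) Subtype.val
  have hB : B = Matrix.diagonal fun j => B j j := by
    ext j k
    by_cases hjk : j = k
    · simp [hjk]
    · simpa [B, Matrix.diagonal_apply_ne _ hjk, Ne.symm hjk] using hrow j.1 j.2 k
  have hne : ∀ j, B j j ≠ 0 := fun j => (hrow j.1 j.2 j).2 rfl
  calc s.card = Fintype.card {j : s // B j j ≠ 0} := by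
        rw [Fintype.card_congr (Equiv.subtypeUnivEquiv hne), Fintype.card_coe]
    _ = B.rank := by rw [← Matrix.rank_diagonal, ← hB]
    _ ≤ A.rank := Matrix.rank_submatrix_le _ _ _

section Dipoles

variable {Line Face : Type} [Fintype Line] [Fintype Face] (incid : Face → Line → ℤ)

def lengthOneFaces (e : Line) : Finset Face :=
  univ.filter fun f => incid f e ≠ 0 ∧ (faceSupp Line Face incid f).card = 1

theorem faceSupp_eq_singleton_of_mem_lengthOneFaces {e : Line} {f : Face}
    (hf : f ∈ lengthOneFaces incid e) : faceSupp Line Face incid f = {e} := by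
  simp only [lengthOneFaces, mem_filter, mem_univ, true_and] at hf
  have he : e ∈ faceSupp Line Face incid f := by simpa [faceSupp] using hf.1
  obtain ⟨a, ha⟩ := card_eq_one.1 hf.2
  rw [ha] at he ⊢
  rw [mem_singleton.1 he]

theorem exists_row_support_eq_of_lengthOneFaces_nonempty {e : Line}
    (he : (lengthOneFaces incid e).Nonempty) :
    ∃ f, ∀ e', incid f e' ≠ 0 ↔ e' = e := by
  obtain ⟨f, hf⟩ := he
  refine ⟨f, fun e' => ?_⟩
  simpa [faceSupp] using Finset.ext_iff.1 (faceSupp_eq_singleton_of_mem_lengthOneFaces incid hf) e'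

end Dipoles

theorem rank_lower_bound_from_dipoles_general
    (Line Face : Type) [Fintype Line] [Fintype Face]
    (incid : Face → Line → ℤ) :
    nDipoles Line Face incid 2 + nDipoles Line Face incid 3 +
        nDipoles Line Face incid 4 + nDipoles Line Face incid 5 ≤
      epsRank Line Face incid := by
  set k : Line → ℕ := fun e => (lengthOneFaces incid e).card
  calc nDipoles Line Face incid 2 + nDipoles Line Face incid 3 +
        nDipoles Line Face incid 4 + nDipoles Line Face incid 5
      = ∑ i ∈ Icc 1 4, (univ.filter fun e => k e = i).card := by
        simp [sum_Icc_succ_top, nDipoles, k, lengthOneFaces]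
    _ = (univ.filter fun e => k e ∈ Icc 1 4).card := sum_card_fiberwise_eq_card_filter _ _ _
    _ ≤ (univ.filter fun e => (lengthOneFaces incid e).Nonempty).card :=
        card_le_card (monotone_filter_right _ fun e _ he => card_pos.1 (mem_Icc.1 he).1)
    _ ≤ epsRank Line Face incid :=
        Matrix.card_le_rank_of_forall_exists_row_support_eq _ _ fun e he => by
          simpa using exists_row_support_eq_of_lengthOneFaces_nonempty incid (by simpa using he)

/-- **Rank lower bound from dipoles.**  For a connected subgraph `H` of a rank-4 TGFT
graph, the rank `r(H)` of the line–internal-face incidence matrix satisfies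
`r(H) ≥ D₂(H) + D₃(H) + D₄(H) + D₅(H)`, `D_p` being the number of `p`-dipole lines. -/
theorem rank_lower_bound_from_dipoles
    (Line Face : Type) [Fintype Line] [Fintype Face]
    (incid : Face → Line → ℤ)
    (hsign : ∀ f e, incid f e = -1 ∨ incid f e = 0 ∨ incid f e = 1)
    (hrank4 : ∀ e : Line, (univ.filter fun f : Face => incid f e ≠ 0).card ≤ 4)
    (hconn : ∀ e e' : Line,
        Relation.EqvGen (fun x y => ∃ f : Face, incid f x ≠ 0 ∧ incid f y ≠ 0) e e') :
    nDipoles Line Face incid 2 + nDipoles Line Face incid 3 +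
        nDipoles Line Face incid 4 + nDipoles Line Face incid 5 ≤
      epsRank Line Face incid :=
  rank_lower_bound_from_dipoles_general Line Face incid

end
end
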